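/- In the hypercube Q_d with p = ⌊d/2⌋, the set X = X_p ∪ X_{p+3}, where X_k is the set of vertices with exactly k ones, is a mutual-visibility set of Q_d. -/

import Mathlib

/-!
A shortest path from `x` to `y` in `Q_d` flips every coordinate where they differ exactly once,
in any order, and each flip changes the number of ones by `±1`. Between two vertices of the
same layer, descend to `x ⊓ y` and climb back (or climb to `x ⊔ y` and descend): the internal
vertices then lie strictly below layer `p` (strictly above layer `p + 3`). From layer `p` to
layer `p + 3`, take one step up and then alternate up- and down-steps until only up-steps
remain: the internal vertices stay in layers `p + 1` and `p + 2`.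
-/

open SimpleGraph

/-- Two vertices are `X`-visible in `G`: some shortest path between them has
no internal vertex in `X`. -/
def IsVisiblePair {V : Type*} (G : SimpleGraph V) (X : Set V) (x y : V) : Prop :=
  ∃ p : G.Walk x y, p.IsPath ∧ p.length = G.dist x y ∧
    ∀ z ∈ p.support, z ∈ X → z = x ∨ z = y

/-- `X` is a mutual-visibility set of `G`. -/
def MutualVisSet {V : Type*} (G : SimpleGraph V) (X : Set V) : Prop :=
  ∀ x ∈ X, ∀ y ∈ X, IsVisiblePair G X x y

/-- `X` is a total mutual-visibility set of `G`. -/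
def TotalMutualVisSet {V : Type*} (G : SimpleGraph V) (X : Set V) : Prop :=
  ∀ x y : V, IsVisiblePair G X x y

/-- The mutual-visibility number `μ(G)`. -/
noncomputable def mutualVisNum {V : Type*} (G : SimpleGraph V) : ℕ :=
  sSup {n | ∃ X : Set V, MutualVisSet G X ∧ X.ncard = n}

/-- The total mutual-visibility number `μₜ(G)`. -/
noncomputable def totalMutualVisNum {V : Type*} (G : SimpleGraph V) : ℕ :=
  sSup {n | ∃ X : Set V, TotalMutualVisSet G X ∧ X.ncard = n}

/-- A set of vertices is convex: every shortest path in `G` between two of its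
vertices has all its vertices in the set. -/
def ConvexSet {V : Type*} (G : SimpleGraph V) (S : Set V) : Prop :=
  ∀ x ∈ S, ∀ y ∈ S, ∀ p : G.Walk x y, p.IsPath → p.length = G.dist x y →
    ∀ z ∈ p.support, z ∈ S

/-- The hypercube `Q_d`: vertices are `{0,1}^d`, adjacency is Hamming distance 1. -/
def Qube (d : ℕ) : SimpleGraph (Fin d → Bool) :=
  SimpleGraph.fromRel (fun x y => hammingDist x y = 1)

open Function

section Hamming

variable {ι : Type*} [Fintype ι] {β : ι → Type*} [∀ i, DecidableEq (β i)]

theorem hammingDist_add_hammingDist_of_between {x y m : ∀ i, β i}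
    (h : ∀ i, m i = x i ∨ m i = y i) :
    hammingDist x m + hammingDist m y = hammingDist x y := by
  simp only [hammingDist, Finset.card_filter, ← Finset.sum_add_distrib]
  refine Finset.sum_congr rfl fun i _ => ?_
  rcases h i with h | h <;> simp [h]

theorem hammingDist_update_of_ne [DecidableEq ι] {x : ∀ i, β i} {i : ι} {b : β i}
    (h : x i ≠ b) : hammingDist x (update x i b) = 1 := by
  rw [hammingDist, Finset.card_eq_one]
  refine ⟨i, Finset.ext fun j => ?_⟩
  by_cases hj : j = i
  · subst hj; simp [h]
  · simp [hj]

theorem hammingDist_update_add_one [DecidableEq ι] {x y : ∀ i, β i} {i : ι}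
    (h : x i ≠ y i) : hammingDist (update x i (y i)) y + 1 = hammingDist x y := by
  rw [← hammingDist_update_of_ne h, add_comm]
  refine hammingDist_add_hammingDist_of_between fun j => ?_
  by_cases hj : j = i
  · subst hj; simp
  · simp [hj]

end Hamming

namespace Qube

variable {d : ℕ} {x y m : Fin d → Bool} {S : Set (Fin d → Bool)}

theorem adj_iff : (Qube d).Adj x y ↔ hammingDist x y = 1 := by
  rw [Qube, SimpleGraph.fromRel_adj]
  constructor
  · rintro ⟨-, h | h⟩
    · exact h
    · rwa [hammingDist_comm]
  · intro h
    exact ⟨fun hxy => by simp [hxy] at h, Or.inl h⟩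

theorem hammingDist_le_length (w : (Qube d).Walk x y) : hammingDist x y ≤ w.length := by
  induction w with
  | nil => simp
  | cons hadj w ih =>
    rw [Walk.length_cons]
    exact (hammingDist_triangle _ _ _).trans (by rw [adj_iff.1 hadj]; omega)

def weight (x : Fin d → Bool) : ℕ := (Finset.univ.filter fun i => x i = true).card

theorem weight_eq_hammingDist_bot (x : Fin d → Bool) : weight x = hammingDist ⊥ x := by
  simp [weight, hammingDist]

theorem weight_add_hammingDist_of_le (h : x ≤ y) : weight x + hammingDist x y = weight y := by
  simp only [weight_eq_hammingDist_bot]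
  refine hammingDist_add_hammingDist_of_between fun i => ?_
  have hi := h i
  cases hx : x i <;> cases hy : y i <;> simp_all [Bool.le_iff_imp]

theorem weight_le_weight (h : x ≤ y) : weight x ≤ weight y :=
  (weight_add_hammingDist_of_le h).symm ▸ Nat.le_add_right _ _

theorem weight_lt_weight (h : x < y) : weight x < weight y := by
  rw [← weight_add_hammingDist_of_le h.le]
  exact Nat.lt_add_of_pos_right (hammingDist_pos.2 h.ne)

theorem weight_update_true {i : Fin d} (h : x i = false) :
    weight (update x i true) = weight x + 1 := by
  rw [← weight_add_hammingDist_of_le (le_update_iff.2 ⟨by simp [h], fun _ _ => le_rfl⟩),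
    hammingDist_update_of_ne (by simp [h])]

theorem weight_update_false {i : Fin d} (h : x i = true) :
    weight (update x i false) + 1 = weight x := by
  have :=
    weight_add_hammingDist_of_le (update_le_iff.2 ⟨Bool.false_le (x i), fun _ _ => le_rfl⟩)
  rwa [hammingDist_comm, hammingDist_update_of_ne (by simp [h])] at this

theorem exists_eq_true_eq_false_of_not_le (h : ¬ x ≤ y) : ∃ i, x i = true ∧ y i = false := by
  obtain ⟨i, hi⟩ := not_forall.1 (mt Pi.le_def.2 h)
  exact ⟨i, (Bool.lt_iff.1 (lt_of_not_ge hi)).symm⟩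

theorem exists_eq_false_eq_true_of_weight_lt (h : weight x < weight y) :
    ∃ i, x i = false ∧ y i = true := by
  obtain ⟨i, hyi, hxi⟩ :=
    exists_eq_true_eq_false_of_not_le fun hyx => h.not_ge (weight_le_weight hyx)
  exact ⟨i, hxi, hyi⟩

/-- Some shortest `x`–`y` path of `Q_d` has all its internal vertices in `S` (the Hamming
distance is the graph distance, see `GeodesicVia.isVisiblePair`). -/
def GeodesicVia (S : Set (Fin d → Bool)) (x y : Fin d → Bool) : Prop :=
  ∃ w : (Qube d).Walk x y,
    w.length = hammingDist x y ∧ ∀ z ∈ w.support, z = x ∨ z = y ∨ z ∈ S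

namespace GeodesicVia

theorem refl (S : Set (Fin d → Bool)) (x : Fin d → Bool) : GeodesicVia S x x :=
  ⟨.nil, by simp, by simp⟩

theorem of_hammingDist_eq_one (h : hammingDist x y = 1) : GeodesicVia S x y :=
  ⟨.cons (adj_iff.2 h) .nil, by simp [h], by simp⟩

theorem symm (h : GeodesicVia S x y) : GeodesicVia S y x := by
  obtain ⟨w, hlen, hsupp⟩ := h
  refine ⟨w.reverse, by rw [Walk.length_reverse, hlen, hammingDist_comm], ?_⟩
  intro z hz
  rw [Walk.support_reverse, List.mem_reverse] at hz
  rcases hsupp z hz with h | h | h <;> simp [h]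

theorem mono {T : Set (Fin d → Bool)} (hST : S ⊆ T) (h : GeodesicVia S x y) :
    GeodesicVia T x y := by
  obtain ⟨w, hlen, hsupp⟩ := h
  exact ⟨w, hlen, fun z hz => (hsupp z hz).imp_right (Or.imp_right (hST ·))⟩

theorem trans (h₁ : GeodesicVia S x m) (h₂ : GeodesicVia S m y)
    (hm : m = x ∨ m = y ∨ m ∈ S) (hd : hammingDist x m + hammingDist m y = hammingDist x y) :
    GeodesicVia S x y := by
  obtain ⟨w₁, hlen₁, hsupp₁⟩ := h₁
  obtain ⟨w₂, hlen₂, hsupp₂⟩ := h₂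
  refine ⟨w₁.append w₂, by rw [Walk.length_append, hlen₁, hlen₂, hd], ?_⟩
  intro z hz
  rw [Walk.support_append, List.mem_append] at hz
  rcases hz with hz | hz
  · rcases hsupp₁ z hz with h | rfl | h
    · exact Or.inl h
    · exact hm
    · exact Or.inr (Or.inr h)
  · rcases hsupp₂ z (List.mem_of_mem_tail hz) with rfl | h | h
    · exact hm
    · exact Or.inr (Or.inl h)
    · exact Or.inr (Or.inr h)

theorem of_update {i : Fin d} (hi : x i ≠ y i)
    (hS : update x i (y i) = y ∨ update x i (y i) ∈ S)
    (h : GeodesicVia S (update x i (y i)) y) :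
    GeodesicVia S x y := by
  refine (of_hammingDist_eq_one (hammingDist_update_of_ne hi)).trans h (Or.inr hS) ?_
  rw [hammingDist_update_of_ne hi, add_comm, hammingDist_update_add_one hi]

theorem isVisiblePair {X : Set (Fin d → Bool)} (h : GeodesicVia S x y)
    (hSX : ∀ z ∈ S, z ∉ X) : IsVisiblePair (Qube d) X x y := by
  obtain ⟨w, hlen, hsupp⟩ := h
  have hdist : w.length = (Qube d).dist x y := by
    obtain ⟨v, hv⟩ := w.reachable.exists_walk_length_eq_dist
    exact le_antisymm (hlen ▸ hv ▸ hammingDist_le_length v) (SimpleGraph.dist_le w)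
  refine ⟨w, w.isPath_of_length_eq_dist hdist, hdist, fun z hz hzX => ?_⟩
  rcases hsupp z hz with h | h | h
  · exact Or.inl h
  · exact Or.inr h
  · exact absurd hzX (hSX z h)

end GeodesicVia

theorem geodesicVia_Ioo_of_le (h : x ≤ y) : GeodesicVia (Set.Ioo x y) x y := by
  induction hn : hammingDist x y generalizing x with
  | zero => rw [hammingDist_eq_zero.1 hn]; exact .refl _ _
  | succ n ih =>
    obtain ⟨i, hi⟩ := Function.ne_iff.1 (hammingDist_ne_zero.1 (by omega) : x ≠ y)
    have hxm : x < update x i (y i) :=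
      lt_of_le_of_ne (le_update_iff.2 ⟨h i, fun _ _ => le_rfl⟩)
        fun hx => hi (by rw [hx, update_self])
    have hmy : update x i (y i) ≤ y := update_le_iff.2 ⟨le_rfl, fun j _ => h j⟩
    refine .of_update hi ?_ ((ih hmy (by have := hammingDist_update_add_one hi; omega)).mono
      fun z hz => ⟨hxm.trans hz.1, hz.2⟩)
    by_cases hm : update x i (y i) = y
    · exact Or.inl hm
    · exact Or.inr ⟨hxm, lt_of_le_of_ne hmy hm⟩

theorem geodesicVia_lt (x y : Fin d → Bool) : GeodesicVia {z | z < x ∨ z < y} x y := by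
  refine ((geodesicVia_Ioo_of_le inf_le_left).symm.mono ?_).trans
    ((geodesicVia_Ioo_of_le inf_le_right).mono ?_) ?_ ?_
  · exact fun z hz => Or.inl hz.2
  · exact fun z hz => Or.inr hz.2
  · by_cases hm : x ⊓ y = x
    · exact Or.inl hm
    · exact Or.inr (Or.inr (Or.inl (lt_of_le_of_ne inf_le_left hm)))
  · refine hammingDist_add_hammingDist_of_between fun i => ?_
    simp only [Pi.inf_apply]
    cases x i <;> cases y i <;> decide

theorem geodesicVia_gt (x y : Fin d → Bool) : GeodesicVia {z | x < z ∨ y < z} x y := by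
  refine ((geodesicVia_Ioo_of_le le_sup_left).mono ?_).trans
    ((geodesicVia_Ioo_of_le le_sup_right).symm.mono ?_) ?_ ?_
  · exact fun z hz => Or.inl hz.1
  · exact fun z hz => Or.inr hz.1
  · by_cases hm : x ⊔ y = x
    · exact Or.inl hm
    · exact Or.inr (Or.inr (Or.inl (lt_of_le_of_ne le_sup_left (Ne.symm hm))))
  · refine hammingDist_add_hammingDist_of_between fun i => ?_
    simp only [Pi.sup_apply]
    cases x i <;> cases y i <;> decide

/-- An up-step followed by a down-step keeps the weight in `{weight x, weight x + 1}`; repeat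
until no down-step is left, then ascend monotonically. -/
theorem geodesicVia_of_weight_add_two_le {a : ℕ} (ha : a ≤ weight x)
    (h : weight x + 2 ≤ weight y) :
    GeodesicVia {z | a ≤ weight z ∧ weight z < weight y} x y := by
  induction hn : hammingDist x y using Nat.strong_induction_on generalizing x with
  | _ n ih =>
  by_cases hle : x ≤ y
  · exact (geodesicVia_Ioo_of_le hle).mono
      fun z hz => ⟨ha.trans (weight_lt_weight hz.1).le, weight_lt_weight hz.2⟩
  obtain ⟨i, hxi, hyi⟩ := exists_eq_true_eq_false_of_not_le hle
  obtain ⟨j, hxj, hyj⟩ := exists_eq_false_eq_true_of_weight_lt (by omega : weight x < weight y)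
  have hij : i ≠ j := by rintro rfl; simp_all
  have hx₁i : update x j (y j) i = x i := update_of_ne hij ..
  have hw₁ : weight (update x j (y j)) = weight x + 1 := hyj ▸ weight_update_true hxj
  have hw₂ : weight (update (update x j (y j)) i (y i)) + 1 = weight (update x j (y j)) := by
    rw [hyi]; exact weight_update_false (hx₁i.trans hxi)
  have hj : x j ≠ y j := by rw [hxj, hyj]; decide
  have hi : update x j (y j) i ≠ y i := by rw [hx₁i, hxi, hyi]; decide
  have hd₁ := hammingDist_update_add_one hj
  have hd₂ := hammingDist_update_add_one hi
  refine .of_update hj (Or.inr ⟨by omega, by omega⟩) ?_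
  refine .of_update hi (Or.inr ⟨by omega, by omega⟩) ?_
  exact ih _ (by omega) (by omega) (by omega) rfl

theorem geodesicVia_of_weight_add_three_le (h : weight x + 3 ≤ weight y) :
    GeodesicVia {z | weight x < weight z ∧ weight z < weight y} x y := by
  obtain ⟨j, hxj, hyj⟩ := exists_eq_false_eq_true_of_weight_lt (by omega : weight x < weight y)
  have hw₁ : weight (update x j (y j)) = weight x + 1 := hyj ▸ weight_update_true hxj
  refine .of_update (by rw [hxj, hyj]; decide) (Or.inr ⟨by omega, by omega⟩) ?_
  exact geodesicVia_of_weight_add_two_le hw₁.ge (by omega)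

theorem mutualVisSet_weight_eq_or_eq_add_three (p : ℕ) :
    MutualVisSet (Qube d) {x | weight x = p ∨ weight x = p + 3} := by
  rintro x (hx | hx) y (hy | hy)
  · refine (geodesicVia_lt x y).isVisiblePair fun z hz hzX => ?_
    rcases hz with hz | hz <;> have := weight_lt_weight hz <;> rcases hzX with h | h <;> omega
  · refine (geodesicVia_of_weight_add_three_le (by omega)).isVisiblePair fun z hz hzX => ?_
    rcases hz with ⟨h₁, h₂⟩
    rcases hzX with h | h <;> omega
  · refine (geodesicVia_of_weight_add_three_le (by omega)).symm.isVisiblePair fun z hz hzX => ?_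
    rcases hz with ⟨h₁, h₂⟩
    rcases hzX with h | h <;> omega
  · refine (geodesicVia_gt x y).isVisiblePair fun z hz hzX => ?_
    rcases hz with hz | hz <;> have := weight_lt_weight hz <;> rcases hzX with h | h <;> omega

end Qube

/-- In `Q_d`, with `p = ⌊d/2⌋`, the union of the layers with exactly `p` ones
and exactly `p + 3` ones is a mutual-visibility set. -/
theorem two_layers_mutualVisSet (d : ℕ) :
    MutualVisSet (Qube d)
      ({x : Fin d → Bool | (Finset.univ.filter fun i => x i = true).card = d / 2} ∪
       {x : Fin d → Bool | (Finset.univ.filter fun i => x i = true).card = d / 2 + 3}) :=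
  Qube.mutualVisSet_weight_eq_or_eq_add_three (d / 2)
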